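/- Let G1, G2 be labeled graphs with |V1| ≤ |V2|. For an injective map f : V1 → V2, define the induced edit cost c(f) = (|V2| − |V1|) + |{v ∈ V1 : label(v) ≠ label(f(v))}| + |{edges (u,v) of G1 with (f(u),f(v)) not an edge of G2}| + |{edges (x,y) of G2 with both endpoints in the image of f whose preimage pair is not an edge of G1}| + |{edges of G2 with at least one endpoint outside the image of f}|. Then the graph edit distance ged(G1, G2) under uniform costs equals the minimum of c(f) over all injective maps f : V1 → V2. -/
import Mathlib


attribute [local instance] Classical.propDecidable

/-- A finite labeled simple graph: vertices are a finite set of naturals,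
with a symmetric irreflexive Boolean adjacency supported on the vertices,
and a vertex labeling function. -/
structure EGraph (L : Type) where
  verts : Finset ℕ
  adj : ℕ → ℕ → Bool
  symm : ∀ u v, adj u v = adj v u
  irrefl : ∀ u, adj u u = false
  adj_mem : ∀ u v, adj u v = true → u ∈ verts ∧ v ∈ verts
  label : ℕ → L

namespace EGraph

variable {L : Type}

/-- Labeled-graph isomorphism: a bijection of vertex sets preserving adjacency
and vertex labels. -/
def Iso (G H : EGraph L) : Prop :=
  ∃ f : ℕ → ℕ, Set.BijOn f ↑G.verts ↑H.verts ∧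
    (∀ u ∈ G.verts, ∀ v ∈ G.verts, H.adj (f u) (f v) = G.adj u v) ∧
    (∀ u ∈ G.verts, H.label (f u) = G.label u)

/-- A single edit operation of uniform cost 1: node insertion, deletion of an
isolated node, edge insertion, edge deletion, or node relabeling. -/
inductive EditStep : EGraph L → EGraph L → Prop
  | insertNode (G G' : EGraph L) (v : ℕ) (hv : v ∉ G.verts)
      (hverts : G'.verts = insert v G.verts) (hadj : G'.adj = G.adj)
      (hlab : ∀ u ∈ G.verts, G'.label u = G.label u) : EditStep G G'
  | deleteNode (G G' : EGraph L) (v : ℕ) (hv : v ∈ G.verts)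
      (hisol : ∀ u, G.adj v u = false)
      (hverts : G'.verts = G.verts.erase v) (hadj : G'.adj = G.adj)
      (hlab : ∀ u ∈ G'.verts, G'.label u = G.label u) : EditStep G G'
  | insertEdge (G G' : EGraph L) (u v : ℕ) (hu : u ∈ G.verts) (hv : v ∈ G.verts)
      (hne : u ≠ v) (hnadj : G.adj u v = false)
      (hverts : G'.verts = G.verts)
      (hadj : ∀ a b, G'.adj a b = true ↔
        (G.adj a b = true ∨ (a = u ∧ b = v) ∨ (a = v ∧ b = u)))
      (hlab : ∀ w ∈ G.verts, G'.label w = G.label w) : EditStep G G'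
  | deleteEdge (G G' : EGraph L) (u v : ℕ) (hadjuv : G.adj u v = true)
      (hverts : G'.verts = G.verts)
      (hadj : ∀ a b, G'.adj a b = true ↔
        (G.adj a b = true ∧ ¬ ((a = u ∧ b = v) ∨ (a = v ∧ b = u))))
      (hlab : ∀ w ∈ G.verts, G'.label w = G.label w) : EditStep G G'
  | relabel (G G' : EGraph L) (v : ℕ) (hv : v ∈ G.verts)
      (hverts : G'.verts = G.verts) (hadj : G'.adj = G.adj)
      (hlab : ∀ u ∈ G.verts, u ≠ v → G'.label u = G.label u) : EditStep G G'

/-- `Reaches n G H` : `H` is obtained from `G` by exactly `n` edit operations. -/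
inductive Reaches : ℕ → EGraph L → EGraph L → Prop
  | refl (G : EGraph L) : Reaches 0 G G
  | step {n : ℕ} {G H K : EGraph L} (h : EditStep G H) (hr : Reaches n H K) :
      Reaches (n + 1) G K

/-- Uniform-cost graph edit distance: the minimum number of edit operations
transforming `G1` into a graph isomorphic to `G2`. -/
noncomputable def ged (G1 G2 : EGraph L) : ℕ :=
  sInf {n | ∃ H, Reaches n G1 H ∧ Iso H G2}

/-- Number of (undirected) edges of a graph. -/
noncomputable def edgeCount (G : EGraph L) : ℕ :=
  ((G.verts ×ˢ G.verts).filter fun p => p.1 < p.2 ∧ G.adj p.1 p.2 = true).card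

end EGraph

/-- The induced edit cost `c(f)` of an injective node matching
`f : V1 → V2` (Proposition 1 of the paper): inserted nodes, mislabeled
matched nodes, edges of `G1` not preserved by `f`, edges of `G2` inside the
image of `f` whose preimage pair is not an edge of `G1`, and edges of `G2`
with an endpoint outside the image of `f`. -/
noncomputable def matchCost {L : Type} (G1 G2 : EGraph L) (f : ℕ → ℕ) : ℕ :=
  (G2.verts.card - G1.verts.card)
  + (G1.verts.filter fun v => G1.label v ≠ G2.label (f v)).card
  + ((G1.verts ×ˢ G1.verts).filter fun p =>
      p.1 < p.2 ∧ G1.adj p.1 p.2 = true ∧ G2.adj (f p.1) (f p.2) = false).card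
  + ((G2.verts ×ˢ G2.verts).filter fun p =>
      p.1 < p.2 ∧ G2.adj p.1 p.2 = true ∧
      p.1 ∈ G1.verts.image f ∧ p.2 ∈ G1.verts.image f ∧
      ¬ ∃ u ∈ G1.verts, ∃ v ∈ G1.verts,
          f u = p.1 ∧ f v = p.2 ∧ G1.adj u v = true).card
  + ((G2.verts ×ˢ G2.verts).filter fun p =>
      p.1 < p.2 ∧ G2.adj p.1 p.2 = true ∧
      (p.1 ∉ G1.verts.image f ∨ p.2 ∉ G1.verts.image f)).card

namespace GEDProof

open EGraph Finset

variable {L : Type}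

lemma egraph_ext {G G' : EGraph L} (h1 : G.verts = G'.verts)
    (h2 : G.adj = G'.adj) (h3 : G.label = G'.label) : G = G' := by
  cases G; cases G'; simp_all

lemma reaches_trans {m n : ℕ} {G H K : EGraph L}
    (h1 : Reaches m G H) (h2 : Reaches n H K) : Reaches (m + n) G K := by
  induction h1 with
  | refl G => simpa using h2
  | step e _ ih =>
      have := Reaches.step e (ih h2)
      convert this using 1
      omega

/-- Phase lemma: delete edges one at a time. -/
lemma reaches_deleteEdges (k : ℕ) : ∀ (G G' : EGraph L),
    G'.verts = G.verts → G'.label = G.label →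
    (∀ a b, G'.adj a b = true → G.adj a b = true) →
    ((G.verts ×ˢ G.verts).filter fun p =>
      p.1 < p.2 ∧ G.adj p.1 p.2 = true ∧ G'.adj p.1 p.2 = false).card = k →
    Reaches k G G' := by
  induction k with
  | zero =>
      intro G G' hv hl hsub hcard
      have hempty := Finset.card_eq_zero.mp hcard
      have hadj : G.adj = G'.adj := by
        funext a b
        rcases hb' : G'.adj a b with _ | _
        · rcases hb : G.adj a b with _ | _
          · rfl
          · exfalso
            obtain ⟨ha, hb2⟩ := G.adj_mem a b hb
            have hne : a ≠ b := by
              intro h; subst h; rw [G.irrefl] at hb; exact absurd hb (by simp)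
            rcases lt_or_gt_of_ne hne with hlt | hlt
            · have : (a, b) ∈ (G.verts ×ˢ G.verts).filter fun p =>
                  p.1 < p.2 ∧ G.adj p.1 p.2 = true ∧ G'.adj p.1 p.2 = false := by
                simp [Finset.mem_filter, Finset.mem_product, ha, hb2, hlt, hb, hb']
              rw [hempty] at this; exact absurd this (Finset.notMem_empty _)
            · have : (b, a) ∈ (G.verts ×ˢ G.verts).filter fun p =>
                  p.1 < p.2 ∧ G.adj p.1 p.2 = true ∧ G'.adj p.1 p.2 = false := by
                have hb' : G'.adj b a = false := by rw [G'.symm]; exact hb'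
                have hbsym : G.adj b a = true := by rw [G.symm]; exact hb
                simp [Finset.mem_filter, Finset.mem_product, ha, hb2, hlt, hb', hbsym]
              rw [hempty] at this; exact absurd this (Finset.notMem_empty _)
        · exact hsub a b hb'
      have : G = G' := egraph_ext hv.symm hadj hl.symm
      rw [this.symm] at *
      exact this ▸ Reaches.refl G
  | succ n ih =>
      intro G G' hv hl hsub hcard
      have hne : ((G.verts ×ˢ G.verts).filter fun p =>
          p.1 < p.2 ∧ G.adj p.1 p.2 = true ∧ G'.adj p.1 p.2 = false).Nonempty := by
        rw [← Finset.card_pos, hcard]; omega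
      obtain ⟨q, hq⟩ := hne
      simp only [Finset.mem_filter, Finset.mem_product] at hq
      obtain ⟨⟨hq1, hq2⟩, hqlt, hqadj, hqadj'⟩ := hq
      set K : EGraph L :=
        { verts := G.verts
          adj := fun a b =>
            if (a = q.1 ∧ b = q.2) ∨ (a = q.2 ∧ b = q.1) then false else G.adj a b
          symm := by
            intro u v; by_cases h : (u = q.1 ∧ v = q.2) ∨ (u = q.2 ∧ v = q.1)
            · have h' : (v = q.1 ∧ u = q.2) ∨ (v = q.2 ∧ u = q.1) := by tauto
              simp [h, h']
            · have h' : ¬ ((v = q.1 ∧ u = q.2) ∨ (v = q.2 ∧ u = q.1)) := by tauto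
              simp [h, h', G.symm u v]
          irrefl := by
            intro u; by_cases h : (u = q.1 ∧ u = q.2) ∨ (u = q.2 ∧ u = q.1)
            · simp [h]
            · simp [h, G.irrefl u]
          adj_mem := by
            intro u v huv
            by_cases h : (u = q.1 ∧ v = q.2) ∨ (u = q.2 ∧ v = q.1)
            · simp [h] at huv
            · simp only [if_neg h] at huv; exact G.adj_mem u v huv
          label := G.label } with hK
      have hKadj : ∀ a b, K.adj a b =
          (if (a = q.1 ∧ b = q.2) ∨ (a = q.2 ∧ b = q.1) then false else G.adj a b) :=
        fun a b => rfl
      have hstep : EditStep G K := by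
        apply EditStep.deleteEdge G K q.1 q.2 hqadj rfl
        · intro a b
          rw [hKadj]
          by_cases h : (a = q.1 ∧ b = q.2) ∨ (a = q.2 ∧ b = q.1) <;> simp [h]
        · intro w _; rfl
      refine Reaches.step hstep (ih K G' hv hl ?_ ?_)
      · intro a b hab
        have hG : G.adj a b = true := hsub a b hab
        rw [hKadj]; rw [if_neg]
        · exact hG
        · rintro (⟨h1, h2⟩ | ⟨h1, h2⟩)
          · subst h1; subst h2; rw [hab] at hqadj'; exact absurd hqadj' (by simp)
          · subst h1; subst h2
            rw [G'.symm, hab] at hqadj'; exact absurd hqadj' (by simp)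
      · have hset : ((K.verts ×ˢ K.verts).filter fun p =>
            p.1 < p.2 ∧ K.adj p.1 p.2 = true ∧ G'.adj p.1 p.2 = false) =
            ((G.verts ×ˢ G.verts).filter fun p =>
            p.1 < p.2 ∧ G.adj p.1 p.2 = true ∧ G'.adj p.1 p.2 = false).erase q := by
          ext p
          simp only [Finset.mem_erase, Finset.mem_filter, Finset.mem_product,
            hKadj, show K.verts = G.verts from rfl]
          constructor
          · rintro ⟨⟨hp1, hp2⟩, hplt, hpadj, hpadj'⟩
            by_cases h : (p.1 = q.1 ∧ p.2 = q.2) ∨ (p.1 = q.2 ∧ p.2 = q.1)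
            · rw [if_pos h] at hpadj; exact absurd hpadj (by simp)
            · rw [if_neg h] at hpadj
              refine ⟨?_, ⟨hp1, hp2⟩, hplt, hpadj, hpadj'⟩
              intro hpq; subst hpq; exact h (Or.inl ⟨rfl, rfl⟩)
          · rintro ⟨hpq, ⟨hp1, hp2⟩, hplt, hpadj, hpadj'⟩
            refine ⟨⟨hp1, hp2⟩, hplt, ?_, hpadj'⟩
            rw [if_neg]
            · exact hpadj
            · rintro (⟨h1, h2⟩ | ⟨h1, h2⟩)
              · exact hpq (Prod.ext h1 h2)
              · rw [h1, h2] at hplt; omega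
        have hqmem : q ∈ (G.verts ×ˢ G.verts).filter fun p =>
            p.1 < p.2 ∧ G.adj p.1 p.2 = true ∧ G'.adj p.1 p.2 = false := by
          simp only [Finset.mem_filter, Finset.mem_product]
          exact ⟨⟨hq1, hq2⟩, hqlt, hqadj, hqadj'⟩
        rw [hset, Finset.card_erase_of_mem hqmem, hcard]
        omega

end GEDProof
namespace GEDProof
open EGraph Finset
variable {L : Type}

/-- Phase lemma: insert edges one at a time. -/
lemma reaches_insertEdges (k : ℕ) : ∀ (G G' : EGraph L),
    G'.verts = G.verts → G'.label = G.label →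
    (∀ a b, G.adj a b = true → G'.adj a b = true) →
    ((G.verts ×ˢ G.verts).filter fun p =>
      p.1 < p.2 ∧ G'.adj p.1 p.2 = true ∧ G.adj p.1 p.2 = false).card = k →
    Reaches k G G' := by
  induction k with
  | zero =>
      intro G G' hv hl hsub hcard
      have hempty := Finset.card_eq_zero.mp hcard
      have hadj : G.adj = G'.adj := by
        funext a b
        rcases hb' : G'.adj a b with _ | _
        · rcases hb : G.adj a b with _ | _
          · rfl
          · rw [hsub a b hb] at hb'; exact hb'.symm ▸ rfl
        · rcases hb : G.adj a b with _ | _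
          · exfalso
            obtain ⟨ha, hb2⟩ := G'.adj_mem a b hb'
            rw [hv] at ha hb2
            have hne : a ≠ b := by
              intro h; subst h; rw [G'.irrefl] at hb'; exact absurd hb' (by simp)
            rcases lt_or_gt_of_ne hne with hlt | hlt
            · have : (a, b) ∈ (G.verts ×ˢ G.verts).filter fun p =>
                  p.1 < p.2 ∧ G'.adj p.1 p.2 = true ∧ G.adj p.1 p.2 = false := by
                simp [Finset.mem_filter, Finset.mem_product, ha, hb2, hlt, hb, hb']
              rw [hempty] at this; exact absurd this (Finset.notMem_empty _)
            · have hb'2 : G'.adj b a = true := by rw [G'.symm]; exact hb'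
              have hb2' : G.adj b a = false := by rw [G.symm]; exact hb
              have : (b, a) ∈ (G.verts ×ˢ G.verts).filter fun p =>
                  p.1 < p.2 ∧ G'.adj p.1 p.2 = true ∧ G.adj p.1 p.2 = false := by
                simp [Finset.mem_filter, Finset.mem_product, ha, hb2, hlt, hb'2, hb2']
              rw [hempty] at this; exact absurd this (Finset.notMem_empty _)
          · rfl
      have : G = G' := egraph_ext hv.symm hadj hl.symm
      exact this ▸ Reaches.refl G
  | succ n ih =>
      intro G G' hv hl hsub hcard
      have hne : ((G.verts ×ˢ G.verts).filter fun p =>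
          p.1 < p.2 ∧ G'.adj p.1 p.2 = true ∧ G.adj p.1 p.2 = false).Nonempty := by
        rw [← Finset.card_pos, hcard]; omega
      obtain ⟨q, hq⟩ := hne
      simp only [Finset.mem_filter, Finset.mem_product] at hq
      obtain ⟨⟨hq1, hq2⟩, hqlt, hqadj', hqadj⟩ := hq
      set K : EGraph L :=
        { verts := G.verts
          adj := fun a b =>
            if (a = q.1 ∧ b = q.2) ∨ (a = q.2 ∧ b = q.1) then true else G.adj a b
          symm := by
            intro u v; by_cases h : (u = q.1 ∧ v = q.2) ∨ (u = q.2 ∧ v = q.1)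
            · have h' : (v = q.1 ∧ u = q.2) ∨ (v = q.2 ∧ u = q.1) := by tauto
              simp [h, h']
            · have h' : ¬ ((v = q.1 ∧ u = q.2) ∨ (v = q.2 ∧ u = q.1)) := by tauto
              simp [h, h', G.symm u v]
          irrefl := by
            intro u; by_cases h : (u = q.1 ∧ u = q.2) ∨ (u = q.2 ∧ u = q.1)
            · exfalso; rcases h with ⟨h1, h2⟩ | ⟨h1, h2⟩ <;> subst h1 <;> omega
            · simp [h, G.irrefl u]
          adj_mem := by
            intro u v huv
            by_cases h : (u = q.1 ∧ v = q.2) ∨ (u = q.2 ∧ v = q.1)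
            · rcases h with ⟨h1, h2⟩ | ⟨h1, h2⟩ <;> subst h1 <;> subst h2 <;>
                exact ⟨by assumption, by assumption⟩
            · simp only [if_neg h] at huv; exact G.adj_mem u v huv
          label := G.label } with hK
      have hKadj : ∀ a b, K.adj a b =
          (if (a = q.1 ∧ b = q.2) ∨ (a = q.2 ∧ b = q.1) then true else G.adj a b) :=
        fun a b => rfl
      have hstep : EditStep G K := by
        apply EditStep.insertEdge G K q.1 q.2 hq1 hq2 (by omega) hqadj rfl
        · intro a b
          rw [hKadj]
          by_cases h : (a = q.1 ∧ b = q.2) ∨ (a = q.2 ∧ b = q.1) <;> simp [h]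
        · intro w _; rfl
      refine Reaches.step hstep (ih K G' hv hl ?_ ?_)
      · intro a b hab
        rw [hKadj] at hab
        by_cases h : (a = q.1 ∧ b = q.2) ∨ (a = q.2 ∧ b = q.1)
        · rcases h with ⟨h1, h2⟩ | ⟨h1, h2⟩ <;> subst h1 <;> subst h2
          · exact hqadj'
          · rw [G'.symm]; exact hqadj'
        · rw [if_neg h] at hab; exact hsub a b hab
      · have hset : ((K.verts ×ˢ K.verts).filter fun p =>
            p.1 < p.2 ∧ G'.adj p.1 p.2 = true ∧ K.adj p.1 p.2 = false) =
            ((G.verts ×ˢ G.verts).filter fun p =>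
            p.1 < p.2 ∧ G'.adj p.1 p.2 = true ∧ G.adj p.1 p.2 = false).erase q := by
          ext p
          simp only [Finset.mem_erase, Finset.mem_filter, Finset.mem_product,
            hKadj, show K.verts = G.verts from rfl]
          constructor
          · rintro ⟨⟨hp1, hp2⟩, hplt, hpadj', hpadj⟩
            by_cases h : (p.1 = q.1 ∧ p.2 = q.2) ∨ (p.1 = q.2 ∧ p.2 = q.1)
            · rw [if_pos h] at hpadj; exact absurd hpadj (by simp)
            · rw [if_neg h] at hpadj
              refine ⟨?_, ⟨hp1, hp2⟩, hplt, hpadj', hpadj⟩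
              intro hpq; subst hpq; exact h (Or.inl ⟨rfl, rfl⟩)
          · rintro ⟨hpq, ⟨hp1, hp2⟩, hplt, hpadj', hpadj⟩
            refine ⟨⟨hp1, hp2⟩, hplt, hpadj', ?_⟩
            rw [if_neg]
            · exact hpadj
            · rintro (⟨h1, h2⟩ | ⟨h1, h2⟩)
              · exact hpq (Prod.ext h1 h2)
              · rw [h1, h2] at hplt; omega
        have hqmem : q ∈ (G.verts ×ˢ G.verts).filter fun p =>
            p.1 < p.2 ∧ G'.adj p.1 p.2 = true ∧ G.adj p.1 p.2 = false := by
          simp only [Finset.mem_filter, Finset.mem_product]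
          exact ⟨⟨hq1, hq2⟩, hqlt, hqadj', hqadj⟩
        rw [hset, Finset.card_erase_of_mem hqmem, hcard]
        omega

/-- Phase lemma: relabel vertices one at a time. -/
lemma reaches_relabels (k : ℕ) : ∀ (G G' : EGraph L),
    G'.verts = G.verts → G'.adj = G.adj →
    (∀ x, x ∉ G.verts → G'.label x = G.label x) →
    (G.verts.filter fun v => G'.label v ≠ G.label v).card = k →
    Reaches k G G' := by
  induction k with
  | zero =>
      intro G G' hv ha hl hcard
      have hempty := Finset.card_eq_zero.mp hcard
      have hlab : G.label = G'.label := by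
        funext x
        by_cases hx : x ∈ G.verts
        · by_contra hne
          have : x ∈ G.verts.filter fun v => G'.label v ≠ G.label v := by
            simp [Finset.mem_filter, hx]; exact fun h => hne h.symm
          rw [hempty] at this; exact absurd this (Finset.notMem_empty _)
        · exact (hl x hx).symm
      exact (egraph_ext hv.symm ha.symm hlab) ▸ Reaches.refl G
  | succ n ih =>
      intro G G' hv ha hl hcard
      have hne : (G.verts.filter fun v => G'.label v ≠ G.label v).Nonempty := by
        rw [← Finset.card_pos, hcard]; omega
      obtain ⟨v, hvmem⟩ := hne
      simp only [Finset.mem_filter] at hvmem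
      obtain ⟨hv1, hv2⟩ := hvmem
      set K : EGraph L :=
        { verts := G.verts, adj := G.adj, symm := G.symm, irrefl := G.irrefl
          adj_mem := G.adj_mem
          label := Function.update G.label v (G'.label v) } with hK
      have hstep : EditStep G K :=
        EditStep.relabel G K v hv1 rfl rfl
          (fun u _ hu => Function.update_of_ne hu _ _)
      refine Reaches.step hstep (ih K G' hv ha ?_ ?_)
      · intro x hx
        have hxv : x ≠ v := fun h => hx (h ▸ hv1)
        show G'.label x = Function.update G.label v (G'.label v) x
        rw [Function.update_of_ne hxv]
        exact hl x hx
      · have hset : (K.verts.filter fun w => G'.label w ≠ K.label w) =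
            (G.verts.filter fun w => G'.label w ≠ G.label w).erase v := by
          ext x
          simp only [Finset.mem_erase, Finset.mem_filter,
            show K.verts = G.verts from rfl,
            show K.label = Function.update G.label v (G'.label v) from rfl]
          constructor
          · rintro ⟨hx, hxne⟩
            by_cases hxv : x = v
            · subst hxv; rw [Function.update_self] at hxne; exact absurd rfl hxne
            · rw [Function.update_of_ne hxv] at hxne; exact ⟨hxv, hx, hxne⟩
          · rintro ⟨hxv, hx, hxne⟩
            rw [Function.update_of_ne hxv]; exact ⟨hx, hxne⟩
        have hvmem : v ∈ G.verts.filter fun w => G'.label w ≠ G.label w := by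
          simp [Finset.mem_filter, hv1, hv2]
        rw [hset, Finset.card_erase_of_mem hvmem, hcard]
        omega

/-- Phase lemma: insert nodes one at a time. -/
lemma reaches_insertNodes (k : ℕ) : ∀ (G G' : EGraph L),
    G.verts ⊆ G'.verts → G'.adj = G.adj →
    (∀ x, x ∉ G'.verts \ G.verts → G'.label x = G.label x) →
    (G'.verts \ G.verts).card = k →
    Reaches k G G' := by
  induction k with
  | zero =>
      intro G G' hv ha hl hcard
      have hempty := Finset.card_eq_zero.mp hcard
      have hverts : G.verts = G'.verts :=
        Finset.Subset.antisymm hv (Finset.sdiff_eq_empty_iff_subset.mp hempty)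
      have hlab : G.label = G'.label := by
        funext x
        exact (hl x (by rw [hempty]; exact Finset.notMem_empty x)).symm
      exact (egraph_ext hverts ha.symm hlab) ▸ Reaches.refl G
  | succ n ih =>
      intro G G' hv ha hl hcard
      have hne : (G'.verts \ G.verts).Nonempty := by
        rw [← Finset.card_pos, hcard]; omega
      obtain ⟨v, hvmem⟩ := hne
      have hv1 : v ∈ G'.verts := (Finset.mem_sdiff.mp hvmem).1
      have hv2 : v ∉ G.verts := (Finset.mem_sdiff.mp hvmem).2
      set K : EGraph L :=
        { verts := insert v G.verts, adj := G.adj, symm := G.symm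
          irrefl := G.irrefl
          adj_mem := fun a b hab =>
            ⟨Finset.mem_insert_of_mem (G.adj_mem a b hab).1,
             Finset.mem_insert_of_mem (G.adj_mem a b hab).2⟩
          label := Function.update G.label v (G'.label v) } with hK
      have hstep : EditStep G K :=
        EditStep.insertNode G K v hv2 rfl rfl
          (fun u hu => Function.update_of_ne (fun h : u = v => hv2 (h ▸ hu)) _ _)
      refine Reaches.step hstep (ih K G' ?_ ha ?_ ?_)
      · exact Finset.insert_subset hv1 hv
      · intro x hx
        show G'.label x = Function.update G.label v (G'.label v) x
        by_cases hxv : x = v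
        · subst hxv; rw [Function.update_self]
        · rw [Function.update_of_ne hxv]
          apply hl
          intro hmem
          rw [Finset.mem_sdiff] at hmem
          apply hx
          rw [Finset.mem_sdiff]
          refine ⟨hmem.1, ?_⟩
          show x ∉ insert v G.verts
          simp [hxv, hmem.2]
      · have hset : G'.verts \ K.verts = (G'.verts \ G.verts).erase v := by
          ext x
          simp only [Finset.mem_erase, Finset.mem_sdiff,
            show K.verts = insert v G.verts from rfl, Finset.mem_insert]
          tauto
        rw [hset, Finset.card_erase_of_mem hvmem, hcard]
        omega

end GEDProof
namespace GEDProof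
open EGraph Finset
variable {L : Type}

lemma card_filter_iff {α : Type*} (s : Finset α) (p q : α → Prop)
    [DecidablePred p] [DecidablePred q]
    (h : ∀ x ∈ s, p x ↔ q x) :
    (s.filter p).card = (s.filter q).card := by
  congr 1
  ext x
  simp only [Finset.mem_filter]
  constructor
  · rintro ⟨hx, hpx⟩; exact ⟨hx, (h x hx).mp hpx⟩
  · rintro ⟨hx, hqx⟩; exact ⟨hx, (h x hx).mpr hqx⟩

/-- Transport a symmetric sorted-pair count along a bijection. -/
lemma card_filter_product_bij (s t : Finset ℕ) (F : ℕ → ℕ)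
    (hbij : Set.BijOn F ↑s ↑t)
    (P Q : ℕ → ℕ → Prop)
    (hPsymm : ∀ a b, P a b → P b a) (hQsymm : ∀ x y, Q x y → Q y x)
    (hPQ : ∀ a ∈ s, ∀ b ∈ s, (P a b ↔ Q (F a) (F b))) :
    ((s ×ˢ s).filter fun p => p.1 < p.2 ∧ P p.1 p.2).card
      = ((t ×ˢ t).filter fun p => p.1 < p.2 ∧ Q p.1 p.2).card := by
  have hinj := hbij.injOn
  apply Finset.card_bij
    (fun p _ => if F p.1 < F p.2 then (F p.1, F p.2) else (F p.2, F p.1))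
  · intro p hp
    simp only [Finset.mem_filter, Finset.mem_product] at hp ⊢
    obtain ⟨⟨hp1, hp2⟩, hplt, hP⟩ := hp
    have h1 : F p.1 ∈ t := hbij.mapsTo hp1
    have h2 : F p.2 ∈ t := hbij.mapsTo hp2
    have hne : F p.1 ≠ F p.2 := fun h =>
      absurd (hinj hp1 hp2 h) (by omega)
    have hQ : Q (F p.1) (F p.2) := (hPQ _ hp1 _ hp2).mp hP
    by_cases hlt : F p.1 < F p.2
    · simp only [if_pos hlt]; exact ⟨⟨h1, h2⟩, hlt, hQ⟩
    · simp only [if_neg hlt]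
      exact ⟨⟨h2, h1⟩, by omega, hQsymm _ _ hQ⟩
  · intro p hp p' hp'
    simp only [Finset.mem_filter, Finset.mem_product] at hp hp'
    obtain ⟨⟨hp1, hp2⟩, hplt, _⟩ := hp
    obtain ⟨⟨hp1', hp2'⟩, hplt', _⟩ := hp'
    intro heq
    by_cases h1 : F p.1 < F p.2 <;> by_cases h2 : F p'.1 < F p'.2 <;>
      simp only [h1, h2, if_true, if_false, Prod.mk.injEq, if_pos, if_neg,
        not_false_eq_true] at heq
    · exact Prod.ext (hinj hp1 hp1' heq.1) (hinj hp2 hp2' heq.2)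
    · have q1 := hinj hp1 hp2' heq.1
      have q2 := hinj hp2 hp1' heq.2
      exfalso; omega
    · have q1 := hinj hp2 hp1' heq.1
      have q2 := hinj hp1 hp2' heq.2
      exfalso; omega
    · have q1 := hinj hp2 hp2' heq.1
      have q2 := hinj hp1 hp1' heq.2
      exact Prod.ext q2 q1
  · intro q hq
    simp only [Finset.mem_filter, Finset.mem_product] at hq
    obtain ⟨⟨hq1, hq2⟩, hqlt, hQ⟩ := hq
    obtain ⟨a, ha, hfa⟩ := hbij.surjOn hq1
    obtain ⟨b, hb, hfb⟩ := hbij.surjOn hq2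
    have ha' : a ∈ s := ha
    have hb' : b ∈ s := hb
    have hab : a ≠ b := fun h => by rw [h, hfb] at hfa; omega
    rcases lt_or_gt_of_ne hab with hlt | hlt
    · refine ⟨(a, b), ?_, ?_⟩
      · simp only [Finset.mem_filter, Finset.mem_product]
        exact ⟨⟨ha', hb'⟩, hlt, (hPQ _ ha' _ hb').mpr (by rw [hfa, hfb]; exact hQ)⟩
      · simp only [hfa, hfb, if_pos hqlt]
    · refine ⟨(b, a), ?_, ?_⟩
      · simp only [Finset.mem_filter, Finset.mem_product]
        refine ⟨⟨hb', ha'⟩, hlt, (hPQ _ hb' _ ha').mpr ?_⟩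
        rw [hfa, hfb]; exact hQsymm _ _ hQ
      · simp only [hfa, hfb]
        rw [if_neg (by omega)]
  end GEDProof
namespace GEDProof
open EGraph Finset
variable {L : Type}

lemma exists_reaches_of_match (G1 G2 : EGraph L) (f : ℕ → ℕ)
    (hinj : Set.InjOn f ↑G1.verts) (hmap : Set.MapsTo f ↑G1.verts ↑G2.verts) :
    ∃ H, Reaches (matchCost G1 G2 f) G1 H ∧ EGraph.Iso H G2 := by
  classical
  set M : ℕ := G1.verts.sup id + 1 with hMdef
  have hM : ∀ x ∈ G1.verts, x < M := by
    intro x hx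
    have : id x ≤ G1.verts.sup id := Finset.le_sup hx
    simp at this; omega
  set N : Finset ℕ := (G2.verts \ G1.verts.image f).image (· + M) with hNdef
  set Hv : Finset ℕ := G1.verts ∪ N with hHvdef
  set F : ℕ → ℕ := fun x => if x ∈ G1.verts then f x else x - M with hFdef
  have hNV1 : ∀ y ∈ N, y ∉ G1.verts := by
    intro y hy hc
    obtain ⟨d, _, rfl⟩ := Finset.mem_image.mp hy
    have := hM _ hc; omega
  have hFV1 : ∀ x ∈ G1.verts, F x = f x := fun x hx => if_pos hx
  have hFN : ∀ y ∈ N, F y ∈ G2.verts \ G1.verts.image f := by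
    intro y hy
    obtain ⟨d, hd, rfl⟩ := Finset.mem_image.mp hy
    have h1 : d + M ∉ G1.verts := hNV1 _ (Finset.mem_image.mpr ⟨d, hd, rfl⟩)
    show (if d + M ∈ G1.verts then f (d + M) else d + M - M) ∈ _
    rw [if_neg h1]
    simpa using hd
  have himsub : G1.verts.image f ⊆ G2.verts := by
    intro x hx
    obtain ⟨u, hu, rfl⟩ := Finset.mem_image.mp hx
    exact hmap hu
  have hFbij : Set.BijOn F ↑Hv ↑G2.verts := by
    refine ⟨?_, ?_, ?_⟩
    · intro x hx
      simp only [hHvdef, Finset.coe_union, Set.mem_union, Finset.mem_coe] at hx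
      rcases hx with hx | hx
      · show F x ∈ ↑G2.verts
        rw [hFV1 x hx]
        exact hmap hx
      · show F x ∈ ↑G2.verts
        have := hFN x hx
        simp only [Finset.mem_sdiff] at this
        exact Finset.mem_coe.mpr this.1
    · intro x hx y hy hxy
      simp only [hHvdef, Finset.coe_union, Set.mem_union, Finset.mem_coe] at hx hy
      rcases hx with hx | hx <;> rcases hy with hy | hy
      · rw [hFV1 x hx, hFV1 y hy] at hxy
        exact hinj hx hy hxy
      · exfalso
        have h1 : F x ∈ G1.verts.image f := by
          rw [hFV1 x hx]; exact Finset.mem_image.mpr ⟨x, hx, rfl⟩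
        have h2 := hFN y hy
        rw [← hxy] at h2
        simp only [Finset.mem_sdiff] at h2
        exact h2.2 h1
      · exfalso
        have h1 : F y ∈ G1.verts.image f := by
          rw [hFV1 y hy]; exact Finset.mem_image.mpr ⟨y, hy, rfl⟩
        have h2 := hFN x hx
        rw [hxy] at h2
        simp only [Finset.mem_sdiff] at h2
        exact h2.2 h1
      · obtain ⟨d, hd, rfl⟩ := Finset.mem_image.mp hx
        obtain ⟨e, he, rfl⟩ := Finset.mem_image.mp hy
        have h1 : F (d + M) = d := by
          show (if d + M ∈ G1.verts then f (d + M) else d + M - M) = d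
          rw [if_neg (hNV1 _ hx)]; omega
        have h2 : F (e + M) = e := by
          show (if e + M ∈ G1.verts then f (e + M) else e + M - M) = e
          rw [if_neg (hNV1 _ hy)]; omega
        rw [h1, h2] at hxy; omega
    · intro x hx
      rw [Finset.mem_coe] at hx
      by_cases him : x ∈ G1.verts.image f
      · obtain ⟨u, hu, rfl⟩ := Finset.mem_image.mp him
        refine ⟨u, ?_, hFV1 u hu⟩
        simp only [hHvdef, Finset.coe_union, Set.mem_union, Finset.mem_coe]
        exact Or.inl hu
      · have hxD : x ∈ G2.verts \ G1.verts.image f := Finset.mem_sdiff.mpr ⟨hx, him⟩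
        have hxN : x + M ∈ N := Finset.mem_image.mpr ⟨x, hxD, rfl⟩
        refine ⟨x + M, ?_, ?_⟩
        · simp only [hHvdef, Finset.coe_union, Set.mem_union, Finset.mem_coe]
          exact Or.inr hxN
        · show (if x + M ∈ G1.verts then f (x + M) else x + M - M) = x
          rw [if_neg (hNV1 _ hxN)]; omega
  -- the target graph H
  obtain ⟨H, hHverts, hHadj, hHlab⟩ : ∃ H : EGraph L, H.verts = Hv ∧
      (∀ a b, H.adj a b =
        if a ∈ Hv ∧ b ∈ Hv ∧ a ≠ b then G2.adj (F a) (F b) else false) ∧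
      (∀ x, H.label x = if x ∈ Hv then G2.label (F x) else G1.label x) := by
    refine ⟨⟨Hv,
      fun a b => if a ∈ Hv ∧ b ∈ Hv ∧ a ≠ b then G2.adj (F a) (F b) else false,
      ?_, ?_, ?_,
      fun x => if x ∈ Hv then G2.label (F x) else G1.label x⟩,
      rfl, fun _ _ => rfl, fun _ => rfl⟩
    · intro u v
      show (if u ∈ Hv ∧ v ∈ Hv ∧ u ≠ v then G2.adj (F u) (F v) else false)
          = (if v ∈ Hv ∧ u ∈ Hv ∧ v ≠ u then G2.adj (F v) (F u) else false)
      by_cases h : u ∈ Hv ∧ v ∈ Hv ∧ u ≠ v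
      · rw [if_pos h, if_pos ⟨h.2.1, h.1, h.2.2.symm⟩]; exact G2.symm _ _
      · rw [if_neg h, if_neg (by tauto)]
    · intro u
      show (if u ∈ Hv ∧ u ∈ Hv ∧ u ≠ u then G2.adj (F u) (F u) else false) = false
      rw [if_neg (by tauto)]
    · intro u v huv
      show u ∈ Hv ∧ v ∈ Hv
      by_cases h : u ∈ Hv ∧ v ∈ Hv ∧ u ≠ v
      · exact ⟨h.1, h.2.1⟩
      · exfalso
        have huv' : (if u ∈ Hv ∧ v ∈ Hv ∧ u ≠ v then G2.adj (F u) (F v) else false)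
            = true := huv
        rw [if_neg h] at huv'; exact absurd huv' (by simp)
  have hIso : EGraph.Iso H G2 := by
    refine ⟨F, hHverts ▸ hFbij, ?_, ?_⟩
    · intro u hu v hv
      rw [hHverts] at hu hv
      by_cases huv : u = v
      · subst huv
        rw [hHadj, G2.irrefl, if_neg (by tauto)]
      · rw [hHadj, if_pos ⟨hu, hv, huv⟩]
    · intro u hu
      rw [hHverts] at hu
      rw [hHlab, if_pos hu]
  -- intermediate graphs
  obtain ⟨A, hAverts, hAadj, hAlab⟩ : ∃ A : EGraph L, A.verts = G1.verts ∧
      (∀ a b, A.adj a b = (G1.adj a b && H.adj a b)) ∧ A.label = G1.label := by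
    refine ⟨⟨G1.verts, fun a b => G1.adj a b && H.adj a b, ?_, ?_, ?_, G1.label⟩,
      rfl, fun _ _ => rfl, rfl⟩
    · intro u v
      show (G1.adj u v && H.adj u v) = (G1.adj v u && H.adj v u)
      rw [G1.symm u v, H.symm u v]
    · intro u
      show (G1.adj u u && H.adj u u) = false
      rw [G1.irrefl, Bool.false_and]
    · intro u v huv
      have h2 : (G1.adj u v && H.adj u v) = true := huv
      exact G1.adj_mem u v (Bool.and_elim_left h2)
  obtain ⟨B, hBverts, hBadj, hBlab⟩ : ∃ B : EGraph L, B.verts = G1.verts ∧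
      B.adj = A.adj ∧
      (∀ x, B.label x = if x ∈ G1.verts then G2.label (f x) else G1.label x) := by
    refine ⟨⟨G1.verts, A.adj, A.symm, A.irrefl, ?_,
      fun x => if x ∈ G1.verts then G2.label (f x) else G1.label x⟩,
      rfl, rfl, fun _ => rfl⟩
    intro u v huv
    have := A.adj_mem u v huv
    rw [hAverts] at this
    exact this
  obtain ⟨C, hCverts, hCadj, hClab⟩ : ∃ C : EGraph L, C.verts = Hv ∧
      C.adj = A.adj ∧ C.label = H.label := by
    refine ⟨⟨Hv, A.adj, A.symm, A.irrefl, ?_, H.label⟩, rfl, rfl, rfl⟩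
    intro u v huv
    have := A.adj_mem u v huv
    rw [hAverts] at this
    exact ⟨Finset.mem_union_left _ this.1, Finset.mem_union_left _ this.2⟩
  -- the five cost terms
  set t1 : ℕ := G2.verts.card - G1.verts.card with ht1
  set t2 : ℕ := (G1.verts.filter fun v => G1.label v ≠ G2.label (f v)).card with ht2
  set t3 : ℕ := ((G1.verts ×ˢ G1.verts).filter fun p =>
      p.1 < p.2 ∧ G1.adj p.1 p.2 = true ∧ G2.adj (f p.1) (f p.2) = false).card with ht3
  set t4 : ℕ := ((G2.verts ×ˢ G2.verts).filter fun p =>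
      p.1 < p.2 ∧ G2.adj p.1 p.2 = true ∧
      p.1 ∈ G1.verts.image f ∧ p.2 ∈ G1.verts.image f ∧
      ¬ ∃ u ∈ G1.verts, ∃ v ∈ G1.verts,
          f u = p.1 ∧ f v = p.2 ∧ G1.adj u v = true).card with ht4
  set t5 : ℕ := ((G2.verts ×ˢ G2.verts).filter fun p =>
      p.1 < p.2 ∧ G2.adj p.1 p.2 = true ∧
      (p.1 ∉ G1.verts.image f ∨ p.2 ∉ G1.verts.image f)).card with ht5
  -- Phase 1 : G1 → A, deleting bad edges
  have r1 : Reaches t3 G1 A := by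
    apply reaches_deleteEdges t3 G1 A hAverts hAlab
    · intro a b hab
      rw [hAadj] at hab
      exact Bool.and_elim_left hab
    · rw [ht3]
      congr 1
      apply Finset.filter_congr
      intro p hp
      simp only [Finset.mem_product] at hp
      obtain ⟨hp1, hp2⟩ := hp
      rw [hAadj]
      constructor
      · rintro ⟨hlt, hadj, hA⟩
        refine ⟨hlt, hadj, ?_⟩
        simp only [hadj, Bool.true_and] at hA
        rw [hHadj, if_pos ⟨Finset.mem_union_left _ hp1, Finset.mem_union_left _ hp2,
          by omega⟩, hFV1 _ hp1, hFV1 _ hp2] at hA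
        exact hA
      · rintro ⟨hlt, hadj, hG2⟩
        refine ⟨hlt, hadj, ?_⟩
        simp only [hadj, Bool.true_and]
        rw [hHadj, if_pos ⟨Finset.mem_union_left _ hp1, Finset.mem_union_left _ hp2,
          by omega⟩, hFV1 _ hp1, hFV1 _ hp2]
        exact hG2
  -- Phase 2 : A → B, relabeling
  have r2 : Reaches t2 A B := by
    apply reaches_relabels t2 A B (by rw [hBverts, hAverts]) (by rw [hBadj])
    · intro x hx
      rw [hAverts] at hx
      rw [hBlab, hAlab, if_neg hx]
    · rw [ht2, hAverts, hAlab]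
      congr 1
      apply Finset.filter_congr
      intro x hx
      rw [hBlab, if_pos hx]
      exact ne_comm
  -- Phase 3 : B → C, inserting nodes
  have r3 : Reaches t1 B C := by
    apply reaches_insertNodes t1 B C
    · rw [hBverts, hCverts]
      exact Finset.subset_union_left
    · rw [hCadj, hBadj]
    · intro x hx
      rw [hCverts, hBverts, Finset.mem_sdiff, not_and, not_not] at hx
      rw [hClab, hHlab, hBlab]
      by_cases hx1 : x ∈ G1.verts
      · rw [if_pos (Finset.mem_union_left _ hx1), hFV1 _ hx1, if_pos hx1]
      · have hxHv : x ∉ Hv := fun hc => hx1 (hx hc)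
        rw [if_neg hxHv, if_neg hx1]
    · rw [hCverts, hBverts, ht1]
      have hNd : Hv \ G1.verts = N := by
        ext y
        simp only [hHvdef, Finset.mem_sdiff, Finset.mem_union]
        constructor
        · rintro ⟨hy | hy, hy2⟩
          · exact absurd hy hy2
          · exact hy
        · intro hy
          exact ⟨Or.inr hy, hNV1 y hy⟩
      rw [hNd, hNdef]
      rw [Finset.card_image_of_injective _ (add_left_injective M)]
      rw [Finset.card_sdiff_of_subset himsub]
      rw [Finset.card_image_of_injOn hinj]
  -- Phase 4 : C → H, inserting edges
  have r4 : Reaches (t4 + t5) C H := by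
    apply reaches_insertEdges (t4 + t5) C H (by rw [hCverts, hHverts])
      (by rw [hClab])
    · intro a b hab
      rw [hCadj, hAadj] at hab
      exact Bool.and_elim_right hab
    · have e45 : ((Hv ×ˢ Hv).filter fun p => p.1 < p.2 ∧
          (H.adj p.1 p.2 = true ∧ (G1.adj p.1 p.2 && H.adj p.1 p.2) = false)).card
          = t4 + t5 := by
        have hbij := card_filter_product_bij Hv G2.verts F hFbij
          (fun a b => H.adj a b = true ∧ (G1.adj a b && H.adj a b) = false)
          (fun x y => G2.adj x y = true ∧
            ((x ∈ G1.verts.image f ∧ y ∈ G1.verts.image f ∧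
              ¬ ∃ u ∈ G1.verts, ∃ v ∈ G1.verts,
                f u = x ∧ f v = y ∧ G1.adj u v = true) ∨
             (x ∉ G1.verts.image f ∨ y ∉ G1.verts.image f)))
          (fun a b hab => ⟨by rw [H.symm b a]; exact hab.1,
            by rw [G1.symm b a, H.symm b a]; exact hab.2⟩)
          (fun x y hxy => ⟨by rw [G2.symm]; exact hxy.1, by
            rcases hxy.2 with ⟨h1, h2, h3⟩ | hh
            · left
              refine ⟨h2, h1, ?_⟩
              rintro ⟨u, hu, v, hv, hfu, hfv, hadj⟩
              exact h3 ⟨v, hv, u, hu, hfv, hfu, by rw [G1.symm]; exact hadj⟩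
            · right; tauto⟩)
          ?_
        · convert hbij using 2
          · ext x
            simp only [Finset.mem_filter]
          rw [ht4, ht5]
          have hdisj : Disjoint
              ((G2.verts ×ˢ G2.verts).filter fun p =>
                p.1 < p.2 ∧ G2.adj p.1 p.2 = true ∧
                p.1 ∈ G1.verts.image f ∧ p.2 ∈ G1.verts.image f ∧
                ¬ ∃ u ∈ G1.verts, ∃ v ∈ G1.verts,
                    f u = p.1 ∧ f v = p.2 ∧ G1.adj u v = true)
              ((G2.verts ×ˢ G2.verts).filter fun p =>
                p.1 < p.2 ∧ G2.adj p.1 p.2 = true ∧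
                (p.1 ∉ G1.verts.image f ∨ p.2 ∉ G1.verts.image f)) := by
            rw [Finset.disjoint_left]
            intro p hp1 hp2
            simp only [Finset.mem_filter] at hp1 hp2
            obtain ⟨_, _, _, h1, h2, _⟩ := hp1
            obtain ⟨_, _, _, (hc | hc)⟩ := hp2
            exacts [hc h1, hc h2]
          rw [← Finset.card_union_of_disjoint hdisj]
          congr 1
          ext x
          simp only [Finset.mem_filter, Finset.mem_union, Finset.mem_product]
          tauto
        · -- pointwise equivalence
          intro a ha b hb
          by_cases hab : a = b
          · subst hab
            constructor
            · rintro ⟨hH, _⟩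
              rw [H.irrefl] at hH; exact absurd hH (by simp)
            · rintro ⟨hG2, _⟩
              rw [G2.irrefl] at hG2; exact absurd hG2 (by simp)
          · have hHab : H.adj a b = G2.adj (F a) (F b) := by
              rw [hHadj, if_pos ⟨ha, hb, hab⟩]
            constructor
            · rintro ⟨hH, hA⟩
              rw [hHab] at hH
              refine ⟨hH, ?_⟩
              rw [hHab, hH, Bool.and_true] at hA
              by_cases ha1 : a ∈ G1.verts <;> by_cases hb1 : b ∈ G1.verts
              · left
                rw [hFV1 _ ha1, hFV1 _ hb1]
                refine ⟨Finset.mem_image.mpr ⟨a, ha1, rfl⟩,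
                  Finset.mem_image.mpr ⟨b, hb1, rfl⟩, ?_⟩
                rintro ⟨u, hu, v, hv, hfu, hfv, hadj⟩
                have hua : u = a := hinj hu ha1 hfu
                have hvb : v = b := hinj hv hb1 hfv
                subst hua; subst hvb
                rw [hadj] at hA
                exact absurd hA (by simp)
              · right; right
                have hbN : b ∈ N := by
                  rcases Finset.mem_union.mp hb with hh | hh
                  · exact absurd hh hb1
                  · exact hh
                have := hFN b hbN
                simp only [Finset.mem_sdiff] at this
                exact this.2
              · right; left
                have haN : a ∈ N := by
                  rcases Finset.mem_union.mp ha with hh | hh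
                  · exact absurd hh ha1
                  · exact hh
                have := hFN a haN
                simp only [Finset.mem_sdiff] at this
                exact this.2
              · right; left
                have haN : a ∈ N := by
                  rcases Finset.mem_union.mp ha with hh | hh
                  · exact absurd hh ha1
                  · exact hh
                have := hFN a haN
                simp only [Finset.mem_sdiff] at this
                exact this.2
            · rintro ⟨hG2, hc⟩
              rw [hHab]
              refine ⟨hG2, ?_⟩
              rw [hG2, Bool.and_true]
              rcases hadj1 : G1.adj a b with _ | _
              · rfl
              · exfalso
                obtain ⟨ha1, hb1⟩ := G1.adj_mem a b hadj1
                rcases hc with ⟨_, _, hne⟩ | hc | hc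
                · exact hne ⟨a, ha1, b, hb1, (hFV1 _ ha1).symm, (hFV1 _ hb1).symm, hadj1⟩
                · exact hc (by rw [hFV1 _ ha1]; exact Finset.mem_image.mpr ⟨a, ha1, rfl⟩)
                · exact hc (by rw [hFV1 _ hb1]; exact Finset.mem_image.mpr ⟨b, hb1, rfl⟩)
      rw [hCverts]
      have hcong : ∀ p ∈ Hv ×ˢ Hv,
          (p.1 < p.2 ∧ H.adj p.1 p.2 = true ∧ C.adj p.1 p.2 = false) ↔
          (p.1 < p.2 ∧ (H.adj p.1 p.2 = true ∧
            (G1.adj p.1 p.2 && H.adj p.1 p.2) = false)) := by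
        intro p _
        rw [hCadj, hAadj]
      rw [Finset.filter_congr hcong]
      exact e45
  -- put it together
  refine ⟨H, ?_, hIso⟩
  have total : Reaches (t3 + t2 + t1 + (t4 + t5)) G1 H :=
    reaches_trans (reaches_trans (reaches_trans r1 r2) r3) r4
  have hmc : matchCost G1 G2 f = t3 + t2 + t1 + (t4 + t5) := by
    show t1 + t2 + t3 + t4 + t5 = t3 + t2 + t1 + (t4 + t5)
    omega
  rw [hmc]
  exact total

end GEDProof
namespace GEDProof
open EGraph Finset
variable {L : Type}

/-- Cost of a partial matching with domain `S`. -/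
noncomputable def pcost (G G2 : EGraph L) (S : Finset ℕ) (f : ℕ → ℕ) : ℕ :=
  (G.verts.card - S.card) + (G2.verts.card - (S.image f).card)
  + (S.filter fun v => G.label v ≠ G2.label (f v)).card
  + ((G.verts ×ˢ G.verts).filter fun p => p.1 < p.2 ∧ G.adj p.1 p.2 = true ∧
      ¬(p.1 ∈ S ∧ p.2 ∈ S ∧ G2.adj (f p.1) (f p.2) = true)).card
  + ((G2.verts ×ˢ G2.verts).filter fun p => p.1 < p.2 ∧ G2.adj p.1 p.2 = true ∧
      ¬ ∃ u ∈ S, ∃ v ∈ S, f u = p.1 ∧ f v = p.2 ∧ G.adj u v = true).card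

lemma pcost_iso (G G2 : EGraph L) (hiso : EGraph.Iso G G2) :
    ∃ f : ℕ → ℕ, Set.InjOn f ↑G.verts ∧ Set.MapsTo f ↑G.verts ↑G2.verts ∧
      pcost G G2 G.verts f = 0 := by
  obtain ⟨g, hbij, hadj, hlab⟩ := hiso
  have himg : G.verts.image g = G2.verts := by
    ext x
    simp only [Finset.mem_image]
    constructor
    · rintro ⟨a, ha, rfl⟩
      exact hbij.mapsTo ha
    · intro hx
      obtain ⟨a, ha, hga⟩ := hbij.surjOn hx
      exact ⟨a, ha, hga⟩
  refine ⟨g, hbij.injOn, hbij.mapsTo, ?_⟩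
  have h1 : G.verts.card - G.verts.card = 0 := by omega
  have h2 : G2.verts.card - (G.verts.image g).card = 0 := by rw [himg]; omega
  have h3 : (G.verts.filter fun v => G.label v ≠ G2.label (g v)).card = 0 := by
    rw [Finset.card_eq_zero, Finset.filter_eq_empty_iff]
    intro v hv hne
    exact hne (hlab v hv).symm
  have h4 : ((G.verts ×ˢ G.verts).filter fun p =>
      p.1 < p.2 ∧ G.adj p.1 p.2 = true ∧
      ¬(p.1 ∈ G.verts ∧ p.2 ∈ G.verts ∧ G2.adj (g p.1) (g p.2) = true)).card = 0 := by
    rw [Finset.card_eq_zero, Finset.filter_eq_empty_iff]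
    rintro p hp ⟨hlt, hadj1, hbad⟩
    simp only [Finset.mem_product] at hp
    exact hbad ⟨hp.1, hp.2, by rw [hadj _ hp.1 _ hp.2]; exact hadj1⟩
  have h5 : ((G2.verts ×ˢ G2.verts).filter fun p =>
      p.1 < p.2 ∧ G2.adj p.1 p.2 = true ∧
      ¬ ∃ u ∈ G.verts, ∃ v ∈ G.verts,
        g u = p.1 ∧ g v = p.2 ∧ G.adj u v = true).card = 0 := by
    rw [Finset.card_eq_zero, Finset.filter_eq_empty_iff]
    rintro p hp ⟨hlt, hadj2, hbad⟩
    simp only [Finset.mem_product] at hp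
    obtain ⟨a, ha, hga⟩ := hbij.surjOn (show (p.1 : ℕ) ∈ ↑G2.verts from hp.1)
    obtain ⟨b, hb, hgb⟩ := hbij.surjOn (show (p.2 : ℕ) ∈ ↑G2.verts from hp.2)
    refine hbad ⟨a, ha, b, hb, hga, hgb, ?_⟩
    have := hadj a ha b hb
    rw [hga, hgb] at this
    rw [← this]
    exact hadj2
  show _ + _ + _ + _ + _ = 0
  omega

lemma matchCost_eq_pcost_full (G1 G2 : EGraph L) (f : ℕ → ℕ)
    (hinj : Set.InjOn f ↑G1.verts) (hmap : Set.MapsTo f ↑G1.verts ↑G2.verts) :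
    matchCost G1 G2 f = pcost G1 G2 G1.verts f := by
  have himsub : G1.verts.image f ⊆ G2.verts := by
    intro x hx
    obtain ⟨u, hu, rfl⟩ := Finset.mem_image.mp hx
    exact hmap hu
  have himcard : (G1.verts.image f).card = G1.verts.card :=
    Finset.card_image_of_injOn hinj
  have e1 : G2.verts.card - G1.verts.card =
      (G1.verts.card - G1.verts.card) + (G2.verts.card - (G1.verts.image f).card) := by
    omega
  have e3 : ((G1.verts ×ˢ G1.verts).filter fun p =>
        p.1 < p.2 ∧ G1.adj p.1 p.2 = true ∧ G2.adj (f p.1) (f p.2) = false).card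
      = ((G1.verts ×ˢ G1.verts).filter fun p =>
        p.1 < p.2 ∧ G1.adj p.1 p.2 = true ∧
        ¬(p.1 ∈ G1.verts ∧ p.2 ∈ G1.verts ∧ G2.adj (f p.1) (f p.2) = true)).card := by
    apply card_filter_iff
    intro p hp
    simp only [Finset.mem_product] at hp
    constructor
    · rintro ⟨hlt, ha, hf⟩
      refine ⟨hlt, ha, ?_⟩
      rintro ⟨_, _, ht⟩
      rw [hf] at ht; exact absurd ht (by simp)
    · rintro ⟨hlt, ha, hb⟩
      refine ⟨hlt, ha, ?_⟩
      rcases hx : G2.adj (f p.1) (f p.2) with _ | _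
      · rfl
      · exact absurd ⟨hp.1, hp.2, hx⟩ hb
  have e45 : ((G2.verts ×ˢ G2.verts).filter fun p =>
        p.1 < p.2 ∧ G2.adj p.1 p.2 = true ∧
        p.1 ∈ G1.verts.image f ∧ p.2 ∈ G1.verts.image f ∧
        ¬ ∃ u ∈ G1.verts, ∃ v ∈ G1.verts,
            f u = p.1 ∧ f v = p.2 ∧ G1.adj u v = true).card
      + ((G2.verts ×ˢ G2.verts).filter fun p =>
        p.1 < p.2 ∧ G2.adj p.1 p.2 = true ∧
        (p.1 ∉ G1.verts.image f ∨ p.2 ∉ G1.verts.image f)).card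
      = ((G2.verts ×ˢ G2.verts).filter fun p =>
        p.1 < p.2 ∧ G2.adj p.1 p.2 = true ∧
        ¬ ∃ u ∈ G1.verts, ∃ v ∈ G1.verts,
            f u = p.1 ∧ f v = p.2 ∧ G1.adj u v = true).card := by
    have hdisj : Disjoint
        ((G2.verts ×ˢ G2.verts).filter fun p =>
          p.1 < p.2 ∧ G2.adj p.1 p.2 = true ∧
          p.1 ∈ G1.verts.image f ∧ p.2 ∈ G1.verts.image f ∧
          ¬ ∃ u ∈ G1.verts, ∃ v ∈ G1.verts,
              f u = p.1 ∧ f v = p.2 ∧ G1.adj u v = true)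
        ((G2.verts ×ˢ G2.verts).filter fun p =>
          p.1 < p.2 ∧ G2.adj p.1 p.2 = true ∧
          (p.1 ∉ G1.verts.image f ∨ p.2 ∉ G1.verts.image f)) := by
      rw [Finset.disjoint_left]
      intro p hp1 hp2
      simp only [Finset.mem_filter] at hp1 hp2
      obtain ⟨_, _, _, h1, h2, _⟩ := hp1
      obtain ⟨_, _, _, (hc | hc)⟩ := hp2
      exacts [hc h1, hc h2]
    rw [← Finset.card_union_of_disjoint hdisj]
    congr 1
    ext p
    simp only [Finset.mem_filter, Finset.mem_union, Finset.mem_product]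
    constructor
    · rintro ((⟨hm, hlt, ha, _, _, hne⟩) | (⟨hm, hlt, ha, hout⟩))
      · exact ⟨hm, hlt, ha, hne⟩
      · refine ⟨hm, hlt, ha, ?_⟩
        rintro ⟨u, hu, v, hv, hfu, hfv, _⟩
        rcases hout with hc | hc
        · exact hc (Finset.mem_image.mpr ⟨u, hu, hfu⟩)
        · exact hc (Finset.mem_image.mpr ⟨v, hv, hfv⟩)
    · rintro ⟨hm, hlt, ha, hne⟩
      by_cases h1 : p.1 ∈ G1.verts.image f
      · by_cases h2 : p.2 ∈ G1.verts.image f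
        · exact Or.inl ⟨hm, hlt, ha, h1, h2, hne⟩
        · exact Or.inr ⟨hm, hlt, ha, Or.inr h2⟩
      · exact Or.inr ⟨hm, hlt, ha, Or.inl h1⟩
  show _ + _ + _ + _ + _ = _ + _ + _ + _ + _
  rw [e3] at *
  omega

end GEDProof
namespace GEDProof
open EGraph Finset
variable {L : Type}

lemma pcost_step (G2 : EGraph L) {G G' : EGraph L} (e : EditStep G G')
    (S : Finset ℕ) (f : ℕ → ℕ) (hS : S ⊆ G'.verts)
    (hinj : Set.InjOn f ↑S) (hmap : Set.MapsTo f ↑S ↑G2.verts) :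
    ∃ T g, T ⊆ G.verts ∧ Set.InjOn g ↑T ∧ Set.MapsTo g ↑T ↑G2.verts ∧
      pcost G G2 T g ≤ pcost G' G2 S f + 1 := by
  classical
  cases e with
  | insertNode v₀ hv hverts hadjEq hlab =>
      refine ⟨S.erase v₀, f, ?_, ?_, ?_, ?_⟩
      · intro x hx
        obtain ⟨hxv, hxS⟩ := Finset.mem_erase.mp hx
        have := hS hxS
        rw [hverts, Finset.mem_insert] at this
        tauto
      · exact hinj.mono (Finset.coe_subset.mpr (Finset.erase_subset _ _))
      · exact fun x hx => hmap (Finset.erase_subset _ _ hx)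
      · have hGc : G'.verts.card = G.verts.card + 1 := by
          rw [hverts, Finset.card_insert_of_notMem hv]
        have hsub1 : S ⊆ insert v₀ (S.erase v₀) := by
          intro x hx
          by_cases hxv : x = v₀
          · subst hxv; exact Finset.mem_insert_self _ _
          · exact Finset.mem_insert_of_mem (Finset.mem_erase.mpr ⟨hxv, hx⟩)
        have hSc : S.card ≤ (S.erase v₀).card + 1 :=
          le_trans (Finset.card_le_card hsub1) (Finset.card_insert_le _ _)
        have himg : (S.image f).card ≤ ((S.erase v₀).image f).card + 1 := by
          have h1 : S.image f ⊆ insert (f v₀) ((S.erase v₀).image f) := by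
            have := Finset.image_subset_image (f := f) hsub1
            rwa [Finset.image_insert] at this
          exact le_trans (Finset.card_le_card h1) (Finset.card_insert_le _ _)
        have hTG : S.erase v₀ ⊆ G.verts := by
          intro x hx
          obtain ⟨hxv, hxS⟩ := Finset.mem_erase.mp hx
          have := hS hxS
          rw [hverts, Finset.mem_insert] at this
          tauto
        have hc3 : ((S.erase v₀).filter fun v => G.label v ≠ G2.label (f v)).card
            ≤ (S.filter fun v => G'.label v ≠ G2.label (f v)).card := by
          apply Finset.card_le_card
          intro x hx
          simp only [Finset.mem_filter, Finset.mem_erase] at hx ⊢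
          obtain ⟨⟨hxv, hxS⟩, hxl⟩ := hx
          refine ⟨hxS, ?_⟩
          rw [hlab x (hTG (Finset.mem_erase.mpr ⟨hxv, hxS⟩))]
          exact hxl
        have hc4 : ((G.verts ×ˢ G.verts).filter fun p =>
              p.1 < p.2 ∧ G.adj p.1 p.2 = true ∧
              ¬(p.1 ∈ S.erase v₀ ∧ p.2 ∈ S.erase v₀ ∧
                G2.adj (f p.1) (f p.2) = true)).card
            ≤ ((G'.verts ×ˢ G'.verts).filter fun p =>
              p.1 < p.2 ∧ G'.adj p.1 p.2 = true ∧
              ¬(p.1 ∈ S ∧ p.2 ∈ S ∧ G2.adj (f p.1) (f p.2) = true)).card := by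
          apply Finset.card_le_card
          intro p hp
          simp only [Finset.mem_filter, Finset.mem_product] at hp ⊢
          obtain ⟨⟨hp1, hp2⟩, hlt, ha, hbad⟩ := hp
          refine ⟨⟨by rw [hverts]; exact Finset.mem_insert_of_mem hp1,
                   by rw [hverts]; exact Finset.mem_insert_of_mem hp2⟩,
                  hlt, by rw [hadjEq]; exact ha, ?_⟩
          rintro ⟨h1, h2, h3⟩
          exact hbad ⟨Finset.mem_erase.mpr ⟨fun h => hv (h ▸ hp1), h1⟩,
            Finset.mem_erase.mpr ⟨fun h => hv (h ▸ hp2), h2⟩, h3⟩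
        have hc5 : ((G2.verts ×ˢ G2.verts).filter fun p =>
              p.1 < p.2 ∧ G2.adj p.1 p.2 = true ∧
              ¬ ∃ u ∈ S.erase v₀, ∃ v ∈ S.erase v₀,
                f u = p.1 ∧ f v = p.2 ∧ G.adj u v = true).card
            ≤ ((G2.verts ×ˢ G2.verts).filter fun p =>
              p.1 < p.2 ∧ G2.adj p.1 p.2 = true ∧
              ¬ ∃ u ∈ S, ∃ v ∈ S,
                f u = p.1 ∧ f v = p.2 ∧ G'.adj u v = true).card := by
          apply Finset.card_le_card
          intro p hp
          simp only [Finset.mem_filter] at hp ⊢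
          obtain ⟨hm, hlt, ha, hbad⟩ := hp
          refine ⟨hm, hlt, ha, ?_⟩
          rintro ⟨u, hu, w, hw, hfu, hfw, hadj⟩
          rw [hadjEq] at hadj
          obtain ⟨hu1, hw1⟩ := G.adj_mem u w hadj
          exact hbad ⟨u, Finset.mem_erase.mpr ⟨fun h => hv (h ▸ hu1), hu⟩,
            w, Finset.mem_erase.mpr ⟨fun h => hv (h ▸ hw1), hw⟩, hfu, hfw, hadj⟩
        show _ + _ + _ + _ + _ ≤ _ + _ + _ + _ + _ + 1
        have hSG' : S.card ≤ G'.verts.card := Finset.card_le_card hS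
        omega
  | deleteNode v₀ hv hisol hverts hadjEq hlab =>
      have hG'G : G'.verts ⊆ G.verts := by
        rw [hverts]; exact Finset.erase_subset _ _
      refine ⟨S, f, fun x hx => hG'G (hS hx), hinj, hmap, ?_⟩
      · have hGc : G.verts.card = G'.verts.card + 1 := by
          rw [hverts, Finset.card_erase_of_mem hv]
          have : 0 < G.verts.card := Finset.card_pos.mpr ⟨v₀, hv⟩
          omega
        have hc3 : (S.filter fun v => G.label v ≠ G2.label (f v)).card
            = (S.filter fun v => G'.label v ≠ G2.label (f v)).card := by
          apply card_filter_iff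
          intro x hx
          rw [hlab x (hS hx)]
        have hc4 : ((G.verts ×ˢ G.verts).filter fun p =>
              p.1 < p.2 ∧ G.adj p.1 p.2 = true ∧
              ¬(p.1 ∈ S ∧ p.2 ∈ S ∧ G2.adj (f p.1) (f p.2) = true)).card
            ≤ ((G'.verts ×ˢ G'.verts).filter fun p =>
              p.1 < p.2 ∧ G'.adj p.1 p.2 = true ∧
              ¬(p.1 ∈ S ∧ p.2 ∈ S ∧ G2.adj (f p.1) (f p.2) = true)).card := by
          apply Finset.card_le_card
          intro p hp
          simp only [Finset.mem_filter, Finset.mem_product] at hp ⊢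
          obtain ⟨⟨hp1, hp2⟩, hlt, ha, hbad⟩ := hp
          have hp1v : p.1 ≠ v₀ := by
            intro h; rw [h, hisol p.2] at ha; exact absurd ha (by simp)
          have hp2v : p.2 ≠ v₀ := by
            intro h
            rw [h] at ha
            rw [G.symm, hisol p.1] at ha
            exact absurd ha (by simp)
          exact ⟨⟨by rw [hverts]; exact Finset.mem_erase.mpr ⟨hp1v, hp1⟩,
                  by rw [hverts]; exact Finset.mem_erase.mpr ⟨hp2v, hp2⟩⟩,
                 hlt, by rw [hadjEq]; exact ha, hbad⟩
        have hc5 : ((G2.verts ×ˢ G2.verts).filter fun p =>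
              p.1 < p.2 ∧ G2.adj p.1 p.2 = true ∧
              ¬ ∃ u ∈ S, ∃ v ∈ S, f u = p.1 ∧ f v = p.2 ∧ G.adj u v = true).card
            = ((G2.verts ×ˢ G2.verts).filter fun p =>
              p.1 < p.2 ∧ G2.adj p.1 p.2 = true ∧
              ¬ ∃ u ∈ S, ∃ v ∈ S, f u = p.1 ∧ f v = p.2 ∧ G'.adj u v = true).card := by
          apply card_filter_iff
          intro p hp
          rw [hadjEq]
        show _ + _ + _ + _ + _ ≤ _ + _ + _ + _ + _ + 1
        have hSG' : S.card ≤ G'.verts.card := Finset.card_le_card hS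
        omega
  | insertEdge u₀ w₀ hu hw hne hnadj hverts hadjIff hlab =>
      have hvsub : S ⊆ G.verts := by rw [← hverts]; exact hS
      refine ⟨S, f, hvsub, hinj, hmap, ?_⟩
      have hGc : G'.verts.card = G.verts.card := by rw [hverts]
      have hc3 : (S.filter fun v => G.label v ≠ G2.label (f v)).card
          = (S.filter fun v => G'.label v ≠ G2.label (f v)).card := by
        apply card_filter_iff
        intro x hx
        rw [hlab x (hvsub hx)]
      have hc4 : ((G.verts ×ˢ G.verts).filter fun p =>
            p.1 < p.2 ∧ G.adj p.1 p.2 = true ∧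
            ¬(p.1 ∈ S ∧ p.2 ∈ S ∧ G2.adj (f p.1) (f p.2) = true)).card
          ≤ ((G'.verts ×ˢ G'.verts).filter fun p =>
            p.1 < p.2 ∧ G'.adj p.1 p.2 = true ∧
            ¬(p.1 ∈ S ∧ p.2 ∈ S ∧ G2.adj (f p.1) (f p.2) = true)).card := by
        apply Finset.card_le_card
        intro p hp
        simp only [Finset.mem_filter, Finset.mem_product, hverts] at hp ⊢
        obtain ⟨⟨hp1, hp2⟩, hlt, ha, hbad⟩ := hp
        exact ⟨⟨hp1, hp2⟩, hlt, (hadjIff _ _).mpr (Or.inl ha), hbad⟩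
      have hc5 : ((G2.verts ×ˢ G2.verts).filter fun p =>
            p.1 < p.2 ∧ G2.adj p.1 p.2 = true ∧
            ¬ ∃ u ∈ S, ∃ v ∈ S, f u = p.1 ∧ f v = p.2 ∧ G.adj u v = true).card
          ≤ ((G2.verts ×ˢ G2.verts).filter fun p =>
            p.1 < p.2 ∧ G2.adj p.1 p.2 = true ∧
            ¬ ∃ u ∈ S, ∃ v ∈ S, f u = p.1 ∧ f v = p.2 ∧ G'.adj u v = true).card + 1 := by
        set q : ℕ × ℕ := if f u₀ < f w₀ then (f u₀, f w₀) else (f w₀, f u₀) with hq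
        have hsub : ((G2.verts ×ˢ G2.verts).filter fun p =>
              p.1 < p.2 ∧ G2.adj p.1 p.2 = true ∧
              ¬ ∃ u ∈ S, ∃ v ∈ S, f u = p.1 ∧ f v = p.2 ∧ G.adj u v = true)
            ⊆ insert q ((G2.verts ×ˢ G2.verts).filter fun p =>
              p.1 < p.2 ∧ G2.adj p.1 p.2 = true ∧
              ¬ ∃ u ∈ S, ∃ v ∈ S, f u = p.1 ∧ f v = p.2 ∧ G'.adj u v = true) := by
          intro p hp
          simp only [Finset.mem_filter] at hp
          obtain ⟨hm, hlt, ha, hbad⟩ := hp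
          by_cases hex : ∃ u ∈ S, ∃ v ∈ S, f u = p.1 ∧ f v = p.2 ∧ G'.adj u v = true
          · obtain ⟨u, huS, w, hwS, hfu, hfw, hadj'⟩ := hex
            have hGadj : ¬ (G.adj u w = true) := by
              intro hc
              exact hbad ⟨u, huS, w, hwS, hfu, hfw, hc⟩
            have := (hadjIff u w).mp hadj'
            rcases this with hc | ⟨h1, h2⟩ | ⟨h1, h2⟩
            · exact absurd hc hGadj
            · subst h1; subst h2
              have hqp : q = p := by
                rw [hq, if_pos (by rw [hfu, hfw]; exact hlt)]
                exact Prod.ext hfu hfw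
              rw [hqp]
              exact Finset.mem_insert_self _ _
            · subst h1; subst h2
              have hqp : q = p := by
                rw [hq, if_neg (by rw [hfw, hfu]; omega)]
                exact Prod.ext hfu hfw
              rw [hqp]
              exact Finset.mem_insert_self _ _
          · exact Finset.mem_insert_of_mem (by
              simp only [Finset.mem_filter]
              exact ⟨hm, hlt, ha, hex⟩)
        calc _ ≤ (insert q ((G2.verts ×ˢ G2.verts).filter fun p =>
              p.1 < p.2 ∧ G2.adj p.1 p.2 = true ∧
              ¬ ∃ u ∈ S, ∃ v ∈ S, f u = p.1 ∧ f v = p.2 ∧ G'.adj u v = true)).card :=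
            Finset.card_le_card hsub
          _ ≤ _ + 1 := Finset.card_insert_le _ _
      show _ + _ + _ + _ + _ ≤ _ + _ + _ + _ + _ + 1
      omega
  | deleteEdge u₀ w₀ hadjuv hverts hadjIff hlab =>
      have hvsub : S ⊆ G.verts := by rw [← hverts]; exact hS
      refine ⟨S, f, hvsub, hinj, hmap, ?_⟩
      have hGc : G'.verts.card = G.verts.card := by rw [hverts]
      have hc3 : (S.filter fun v => G.label v ≠ G2.label (f v)).card
          = (S.filter fun v => G'.label v ≠ G2.label (f v)).card := by
        apply card_filter_iff
        intro x hx
        rw [hlab x (hvsub hx)]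
      have hne : u₀ ≠ w₀ := by
        intro h; rw [h, G.irrefl] at hadjuv; exact absurd hadjuv (by simp)
      have hc4 : ((G.verts ×ˢ G.verts).filter fun p =>
            p.1 < p.2 ∧ G.adj p.1 p.2 = true ∧
            ¬(p.1 ∈ S ∧ p.2 ∈ S ∧ G2.adj (f p.1) (f p.2) = true)).card
          ≤ ((G'.verts ×ˢ G'.verts).filter fun p =>
            p.1 < p.2 ∧ G'.adj p.1 p.2 = true ∧
            ¬(p.1 ∈ S ∧ p.2 ∈ S ∧ G2.adj (f p.1) (f p.2) = true)).card + 1 := by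
        set q : ℕ × ℕ := if u₀ < w₀ then (u₀, w₀) else (w₀, u₀) with hq
        have hsub : ((G.verts ×ˢ G.verts).filter fun p =>
              p.1 < p.2 ∧ G.adj p.1 p.2 = true ∧
              ¬(p.1 ∈ S ∧ p.2 ∈ S ∧ G2.adj (f p.1) (f p.2) = true))
            ⊆ insert q ((G'.verts ×ˢ G'.verts).filter fun p =>
              p.1 < p.2 ∧ G'.adj p.1 p.2 = true ∧
              ¬(p.1 ∈ S ∧ p.2 ∈ S ∧ G2.adj (f p.1) (f p.2) = true)) := by
          intro p hp
          simp only [Finset.mem_filter, Finset.mem_product] at hp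
          obtain ⟨⟨hp1, hp2⟩, hlt, ha, hbad⟩ := hp
          by_cases hpq : (p.1 = u₀ ∧ p.2 = w₀) ∨ (p.1 = w₀ ∧ p.2 = u₀)
          · have hqp : q = p := by
              rcases hpq with ⟨h1, h2⟩ | ⟨h1, h2⟩
              · rw [hq, if_pos (by rw [← h1, ← h2]; exact hlt)]
                exact Prod.ext h1.symm h2.symm
              · rw [hq, if_neg (by rw [← h2, ← h1]; omega)]
                exact Prod.ext h1.symm h2.symm
            rw [hqp]
            exact Finset.mem_insert_self _ _
          · refine Finset.mem_insert_of_mem ?_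
            simp only [Finset.mem_filter, Finset.mem_product, hverts]
            exact ⟨⟨hp1, hp2⟩, hlt, (hadjIff _ _).mpr ⟨ha, hpq⟩, hbad⟩
        calc _ ≤ (insert q ((G'.verts ×ˢ G'.verts).filter fun p =>
              p.1 < p.2 ∧ G'.adj p.1 p.2 = true ∧
              ¬(p.1 ∈ S ∧ p.2 ∈ S ∧ G2.adj (f p.1) (f p.2) = true))).card :=
            Finset.card_le_card hsub
          _ ≤ _ + 1 := Finset.card_insert_le _ _
      have hc5 : ((G2.verts ×ˢ G2.verts).filter fun p =>
            p.1 < p.2 ∧ G2.adj p.1 p.2 = true ∧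
            ¬ ∃ u ∈ S, ∃ v ∈ S, f u = p.1 ∧ f v = p.2 ∧ G.adj u v = true).card
          ≤ ((G2.verts ×ˢ G2.verts).filter fun p =>
            p.1 < p.2 ∧ G2.adj p.1 p.2 = true ∧
            ¬ ∃ u ∈ S, ∃ v ∈ S, f u = p.1 ∧ f v = p.2 ∧ G'.adj u v = true).card := by
        apply Finset.card_le_card
        intro p hp
        simp only [Finset.mem_filter] at hp ⊢
        obtain ⟨hm, hlt, ha, hbad⟩ := hp
        refine ⟨hm, hlt, ha, ?_⟩
        rintro ⟨u, huS, w, hwS, hfu, hfw, hadj'⟩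
        exact hbad ⟨u, huS, w, hwS, hfu, hfw, ((hadjIff u w).mp hadj').1⟩
      show _ + _ + _ + _ + _ ≤ _ + _ + _ + _ + _ + 1
      omega
  | relabel v₀ hv hverts hadjEq hlab =>
      have hvsub : S ⊆ G.verts := by rw [← hverts]; exact hS
      refine ⟨S, f, hvsub, hinj, hmap, ?_⟩
      have hGc : G'.verts.card = G.verts.card := by rw [hverts]
      have hc3 : (S.filter fun v => G.label v ≠ G2.label (f v)).card
          ≤ (S.filter fun v => G'.label v ≠ G2.label (f v)).card + 1 := by
        have hsub : (S.filter fun v => G.label v ≠ G2.label (f v))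
            ⊆ insert v₀ (S.filter fun v => G'.label v ≠ G2.label (f v)) := by
          intro x hx
          simp only [Finset.mem_filter] at hx
          obtain ⟨hxS, hxl⟩ := hx
          by_cases hxv : x = v₀
          · subst hxv; exact Finset.mem_insert_self _ _
          · refine Finset.mem_insert_of_mem ?_
            simp only [Finset.mem_filter]
            exact ⟨hxS, by rw [hlab x (hvsub hxS) hxv]; exact hxl⟩
        exact le_trans (Finset.card_le_card hsub) (Finset.card_insert_le _ _)
      have hc4 : ((G.verts ×ˢ G.verts).filter fun p =>
            p.1 < p.2 ∧ G.adj p.1 p.2 = true ∧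
            ¬(p.1 ∈ S ∧ p.2 ∈ S ∧ G2.adj (f p.1) (f p.2) = true)).card
          ≤ ((G'.verts ×ˢ G'.verts).filter fun p =>
            p.1 < p.2 ∧ G'.adj p.1 p.2 = true ∧
            ¬(p.1 ∈ S ∧ p.2 ∈ S ∧ G2.adj (f p.1) (f p.2) = true)).card := by
        apply Finset.card_le_card
        intro p hp
        simp only [Finset.mem_filter, Finset.mem_product, hverts, hadjEq] at hp ⊢
        exact hp
      have hc5 : ((G2.verts ×ˢ G2.verts).filter fun p =>
            p.1 < p.2 ∧ G2.adj p.1 p.2 = true ∧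
            ¬ ∃ u ∈ S, ∃ v ∈ S, f u = p.1 ∧ f v = p.2 ∧ G.adj u v = true).card
          = ((G2.verts ×ˢ G2.verts).filter fun p =>
            p.1 < p.2 ∧ G2.adj p.1 p.2 = true ∧
            ¬ ∃ u ∈ S, ∃ v ∈ S, f u = p.1 ∧ f v = p.2 ∧ G'.adj u v = true).card := by
        apply card_filter_iff
        intro p hp
        rw [hadjEq]
      show _ + _ + _ + _ + _ ≤ _ + _ + _ + _ + _ + 1
      omega

end GEDProof

namespace GEDProof
open EGraph Finset
variable {L : Type}

lemma pcost_reaches (G2 : EGraph L) : ∀ {n : ℕ} {G H : EGraph L}, Reaches n G H →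
    EGraph.Iso H G2 → ∃ S g, S ⊆ G.verts ∧ Set.InjOn g ↑S ∧
      Set.MapsTo g ↑S ↑G2.verts ∧ pcost G G2 S g ≤ n := by
  intro n G H hr
  induction hr with
  | refl G =>
      intro hiso
      obtain ⟨f, hinj, hmap, hp⟩ := pcost_iso G G2 hiso
      exact ⟨G.verts, f, le_refl _, hinj, hmap, by omega⟩
  | step e hr ih =>
      intro hiso
      obtain ⟨S, f, hSsub, hinj, hmap, hp⟩ := ih hiso
      obtain ⟨T, g, hTsub, hinj', hmap', hp'⟩ := pcost_step G2 e S f hSsub hinj hmap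
      exact ⟨T, g, hTsub, hinj', hmap', by omega⟩

lemma pcost_extend (G1 G2 : EGraph L) (hcard : G1.verts.card ≤ G2.verts.card) :
    ∀ (k : ℕ) (S : Finset ℕ) (f : ℕ → ℕ), S ⊆ G1.verts → Set.InjOn f ↑S →
      Set.MapsTo f ↑S ↑G2.verts → (G1.verts \ S).card = k →
      ∃ g : ℕ → ℕ, Set.InjOn g ↑G1.verts ∧ Set.MapsTo g ↑G1.verts ↑G2.verts ∧
        matchCost G1 G2 g ≤ pcost G1 G2 S f := by
  intro k
  induction k with
  | zero =>
      intro S f hSsub hinj hmap hk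
      have hSeq : S = G1.verts :=
        Finset.Subset.antisymm hSsub
          (Finset.sdiff_eq_empty_iff_subset.mp (Finset.card_eq_zero.mp hk))
      subst hSeq
      exact ⟨f, hinj, hmap, le_of_eq (matchCost_eq_pcost_full _ _ f hinj hmap)⟩
  | succ m ih =>
      intro S f hSsub hinj hmap hk
      have hne : (G1.verts \ S).Nonempty := by rw [← Finset.card_pos, hk]; omega
      obtain ⟨v, hv⟩ := hne
      rw [Finset.mem_sdiff] at hv
      obtain ⟨hvG, hvS⟩ := hv
      have himgsub : S.image f ⊆ G2.verts := by
        intro x hx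
        obtain ⟨u, hu, rfl⟩ := Finset.mem_image.mp hx
        exact hmap hu
      have himgcard : (S.image f).card = S.card := Finset.card_image_of_injOn hinj
      have hslt : S.card < G1.verts.card :=
        Finset.card_lt_card ⟨hSsub, fun hcon => hvS (hcon hvG)⟩
      have hwne : (G2.verts \ S.image f).Nonempty := by
        rw [← Finset.card_pos]
        have := Finset.le_card_sdiff (S.image f) G2.verts
        omega
      obtain ⟨w, hw⟩ := hwne
      rw [Finset.mem_sdiff] at hw
      obtain ⟨hwG2, hwim⟩ := hw
      have hgSgen : ∀ x ∈ S, Function.update f v w x = f x := fun x hx =>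
        Function.update_of_ne (fun h : x = v => hvS (h ▸ hx)) _ _
      have hgv : Function.update f v w v = w := Function.update_self _ _ _
      have himg' : (insert v S).image (Function.update f v w)
          = insert w (S.image f) := by
        rw [Finset.image_insert, hgv]
        congr 1
        apply Finset.image_congr
        intro x hx
        exact hgSgen x hx
      have hinj' : Set.InjOn (Function.update f v w) ↑(insert v S) := by
        intro x hx y hy hxy
        simp only [Finset.coe_insert, Set.mem_insert_iff, Finset.mem_coe] at hx hy
        rcases hx with rfl | hx <;> rcases hy with rfl | hy
        · rfl
        · rw [hgv, hgSgen y hy] at hxy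
          exact absurd (Finset.mem_image.mpr ⟨y, hy, hxy.symm⟩) hwim
        · rw [hgv, hgSgen x hx] at hxy
          exact absurd (Finset.mem_image.mpr ⟨x, hx, hxy⟩) hwim
        · rw [hgSgen x hx, hgSgen y hy] at hxy
          exact hinj hx hy hxy
      have hmap' : Set.MapsTo (Function.update f v w) ↑(insert v S) ↑G2.verts := by
        intro x hx
        simp only [Finset.coe_insert, Set.mem_insert_iff, Finset.mem_coe] at hx
        show Function.update f v w x ∈ ↑G2.verts
        rcases hx with hxv | hx
        · rw [hxv, hgv]; exact hwG2
        · rw [hgSgen x hx]; exact hmap hx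
      have hS'sub : insert v S ⊆ G1.verts := Finset.insert_subset hvG hSsub
      have hS'card : (insert v S).card = S.card + 1 :=
        Finset.card_insert_of_notMem hvS
      have himc : ((insert v S).image (Function.update f v w)).card
          = (S.image f).card + 1 := by
        rw [himg', Finset.card_insert_of_notMem hwim]
      have himlt : (S.image f).card < G2.verts.card :=
        Finset.card_lt_card ⟨himgsub, fun hcon => hwim (hcon hwG2)⟩
      have hc3 : ((insert v S).filter fun x =>
            G1.label x ≠ G2.label (Function.update f v w x)).card
          ≤ (S.filter fun x => G1.label x ≠ G2.label (f x)).card + 1 := by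
        have hsub : ((insert v S).filter fun x =>
              G1.label x ≠ G2.label (Function.update f v w x))
            ⊆ insert v (S.filter fun x => G1.label x ≠ G2.label (f x)) := by
          intro x hx
          simp only [Finset.mem_filter, Finset.mem_insert] at hx
          obtain ⟨hx1 | hx1, hx2⟩ := hx
          · subst hx1; exact Finset.mem_insert_self _ _
          · refine Finset.mem_insert_of_mem ?_
            simp only [Finset.mem_filter]
            refine ⟨hx1, ?_⟩
            rw [← hgSgen x hx1]
            exact hx2
        exact le_trans (Finset.card_le_card hsub) (Finset.card_insert_le _ _)
      have hc4 : ((G1.verts ×ˢ G1.verts).filter fun p =>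
            p.1 < p.2 ∧ G1.adj p.1 p.2 = true ∧
            ¬(p.1 ∈ insert v S ∧ p.2 ∈ insert v S ∧
              G2.adj (Function.update f v w p.1) (Function.update f v w p.2) = true)).card
          ≤ ((G1.verts ×ˢ G1.verts).filter fun p =>
            p.1 < p.2 ∧ G1.adj p.1 p.2 = true ∧
            ¬(p.1 ∈ S ∧ p.2 ∈ S ∧ G2.adj (f p.1) (f p.2) = true)).card := by
        apply Finset.card_le_card
        intro p hp
        simp only [Finset.mem_filter, Finset.mem_product] at hp ⊢
        obtain ⟨hm, hlt, ha, hbad⟩ := hp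
        refine ⟨hm, hlt, ha, ?_⟩
        rintro ⟨h1, h2, h3⟩
        refine hbad ⟨Finset.mem_insert_of_mem h1, Finset.mem_insert_of_mem h2, ?_⟩
        rw [hgSgen p.1 h1, hgSgen p.2 h2]
        exact h3
      have hc5 : ((G2.verts ×ˢ G2.verts).filter fun p =>
            p.1 < p.2 ∧ G2.adj p.1 p.2 = true ∧
            ¬ ∃ u ∈ insert v S, ∃ v' ∈ insert v S,
              Function.update f v w u = p.1 ∧ Function.update f v w v' = p.2 ∧
              G1.adj u v' = true).card
          ≤ ((G2.verts ×ˢ G2.verts).filter fun p =>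
            p.1 < p.2 ∧ G2.adj p.1 p.2 = true ∧
            ¬ ∃ u ∈ S, ∃ v' ∈ S, f u = p.1 ∧ f v' = p.2 ∧ G1.adj u v' = true).card := by
        apply Finset.card_le_card
        intro p hp
        simp only [Finset.mem_filter] at hp ⊢
        obtain ⟨hm, hlt, ha, hbad⟩ := hp
        refine ⟨hm, hlt, ha, ?_⟩
        rintro ⟨u, hu, v', hv', hfu, hfv', hadj⟩
        refine hbad ⟨u, Finset.mem_insert_of_mem hu, v', Finset.mem_insert_of_mem hv',
          ?_, ?_, hadj⟩
        · rw [hgSgen u hu]; exact hfu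
        · rw [hgSgen v' hv']; exact hfv'
      have hkm : (G1.verts \ insert v S).card = m := by
        have hseteq : G1.verts \ insert v S = (G1.verts \ S).erase v := by
          ext x
          simp only [Finset.mem_sdiff, Finset.mem_erase, Finset.mem_insert]
          tauto
        rw [hseteq, Finset.card_erase_of_mem (Finset.mem_sdiff.mpr ⟨hvG, hvS⟩), hk]
        omega
      obtain ⟨g₀, hg1, hg2, hg3⟩ := ih (insert v S) (Function.update f v w)
        hS'sub hinj' hmap' hkm
      refine ⟨g₀, hg1, hg2, le_trans hg3 ?_⟩
      show _ + _ + _ + _ + _ ≤ _ + _ + _ + _ + _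
      omega

end GEDProof

/-- Proposition 1: the GED equals the minimum induced edit cost
over all injective node matchings from the smaller graph to the larger one. -/
theorem ged_eq_min_matchCost (L : Type) (G1 G2 : EGraph L)
    (h : G1.verts.card ≤ G2.verts.card) :
    EGraph.ged G1 G2 =
      sInf { c : ℕ | ∃ f : ℕ → ℕ, Set.InjOn f ↑G1.verts ∧
        Set.MapsTo f ↑G1.verts ↑G2.verts ∧ c = matchCost G1 G2 f } := by

  classical
  -- an initial injection, giving nonemptiness of the matching-cost set
  obtain ⟨t, htsub, htcard⟩ := Finset.exists_subset_card_eq h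
  let e := Finset.equivOfCardEq (htcard.symm ▸ rfl : G1.verts.card = t.card)
  set f₀ : ℕ → ℕ := fun x => if hx : x ∈ G1.verts then (e ⟨x, hx⟩ : ℕ) else 0 with hf₀
  have hinj₀ : Set.InjOn f₀ ↑G1.verts := by
    intro x hx y hy hxy
    have hx' : x ∈ G1.verts := hx
    have hy' : y ∈ G1.verts := hy
    rw [hf₀] at hxy
    simp only [dif_pos hx', dif_pos hy'] at hxy
    exact congrArg Subtype.val (e.injective (Subtype.ext hxy))
  have hmap₀ : Set.MapsTo f₀ ↑G1.verts ↑G2.verts := by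
    intro x hx
    have hx' : x ∈ G1.verts := hx
    show f₀ x ∈ ↑G2.verts
    rw [hf₀]
    simp only [dif_pos hx']
    exact htsub (e ⟨x, hx'⟩).2
  have hS2ne : { c : ℕ | ∃ f : ℕ → ℕ, Set.InjOn f ↑G1.verts ∧
      Set.MapsTo f ↑G1.verts ↑G2.verts ∧ c = matchCost G1 G2 f }.Nonempty :=
    ⟨matchCost G1 G2 f₀, f₀, hinj₀, hmap₀, rfl⟩
  -- the minimum matching cost is attained
  obtain ⟨f, hinj, hmap, hceq⟩ := Nat.sInf_mem hS2ne
  obtain ⟨H, hr, hiso⟩ := GEDProof.exists_reaches_of_match G1 G2 f hinj hmap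
  have hS1mem : matchCost G1 G2 f ∈ {n | ∃ H, EGraph.Reaches n G1 H ∧ EGraph.Iso H G2} :=
    ⟨H, hr, hiso⟩
  have hle1 : EGraph.ged G1 G2 ≤ sInf { c : ℕ | ∃ f : ℕ → ℕ, Set.InjOn f ↑G1.verts ∧
      Set.MapsTo f ↑G1.verts ↑G2.verts ∧ c = matchCost G1 G2 f } := by
    rw [hceq]
    exact Nat.sInf_le hS1mem
  -- the GED is attained
  have hS1ne : {n | ∃ H, EGraph.Reaches n G1 H ∧ EGraph.Iso H G2}.Nonempty :=
    ⟨matchCost G1 G2 f, hS1mem⟩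
  obtain ⟨H', hr', hiso'⟩ := Nat.sInf_mem hS1ne
  obtain ⟨S, g, hSsub, hginj, hgmap, hgp⟩ := GEDProof.pcost_reaches G2 hr' hiso'
  obtain ⟨g₀, hg0inj, hg0map, hg0le⟩ := GEDProof.pcost_extend G1 G2 h
    (G1.verts \ S).card S g hSsub hginj hgmap rfl
  have hle2 : sInf { c : ℕ | ∃ f : ℕ → ℕ, Set.InjOn f ↑G1.verts ∧
      Set.MapsTo f ↑G1.verts ↑G2.verts ∧ c = matchCost G1 G2 f }
      ≤ EGraph.ged G1 G2 := by
    have hmem : matchCost G1 G2 g₀ ∈ { c : ℕ | ∃ f : ℕ → ℕ, Set.InjOn f ↑G1.verts ∧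
        Set.MapsTo f ↑G1.verts ↑G2.verts ∧ c = matchCost G1 G2 f } :=
      ⟨g₀, hg0inj, hg0map, rfl⟩
    calc sInf _ ≤ matchCost G1 G2 g₀ := Nat.sInf_le hmem
      _ ≤ GEDProof.pcost G1 G2 S g := hg0le
      _ ≤ EGraph.ged G1 G2 := hgp
  exact le_antisymm hle1 hle2
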